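/- Let u : ℝ → ℝ be C² and on the interval [t^{n-1}, t^n] with midpoint t^{n-1/2} define r := ∫_{t^{n-1/2}}^{t^n} (t^n - s) u''(s) ds - ∫_{t^{n-1}}^{t^{n-1/2}} (t^{n-1} - s) u''(s) ds. Then r² ≤ ((Δt)³/12)·∫_{t^{n-1}}^{t^n} (u''(s))² ds, where Δt = t^n - t^{n-1}. -/

import Mathlib

/-!
On either side of the midpoint the kernel is, up to sign, the distance to the nearer endpoint,
so the two integrals combine into `r = ∫ w u''` with the tent weight
`w s = min (s - t^{n-1}) (t^n - s)`. Cauchy–Schwarz then gives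
`r² ≤ (∫ w²) (∫ u''²)`, and `∫ w² = 2 ∫₀^{Δt/2} x² dx = Δt³/12`.
-/

open MeasureTheory intervalIntegral Set

theorem sq_integral_mul_le_integral_sq_mul_integral_sq {α : Type*} [MeasurableSpace α]
    {μ : Measure α} {f g : α → ℝ} (hf : MemLp f 2 μ) (hg : MemLp g 2 μ) :
    (∫ x, f x * g x ∂μ) ^ 2 ≤ (∫ x, f x ^ 2 ∂μ) * ∫ x, g x ^ 2 ∂μ := by
  have inner_toLp (φ ψ : α → ℝ) (hφ : MemLp φ 2 μ) (hψ : MemLp ψ 2 μ) :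
      inner ℝ (hφ.toLp φ) (hψ.toLp ψ) = ∫ x, φ x * ψ x ∂μ := by
    rw [L2.inner_def]
    refine integral_congr_ae ?_
    filter_upwards [hφ.coeFn_toLp, hψ.coeFn_toLp] with x hφx hψx
    simp [hφx, hψx, mul_comm]
  have h := real_inner_mul_inner_self_le (hf.toLp f) (hg.toLp g)
  simp only [inner_toLp, ← sq] at h
  exact h

theorem memLp_two_restrict_Ioc_of_continuousOn {f : ℝ → ℝ} {a b : ℝ}
    (hf : ContinuousOn f (Icc a b)) : MemLp f 2 (volume.restrict (Ioc a b)) :=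
  (memLp_two_iff_integrable_sq
      ((hf.mono Ioc_subset_Icc_self).aestronglyMeasurable measurableSet_Ioc)).2
    ((hf.pow 2).integrableOn_Icc.mono_set Ioc_subset_Icc_self)

theorem sq_intervalIntegral_mul_le {f g : ℝ → ℝ} {a b : ℝ} (hab : a ≤ b)
    (hf : ContinuousOn f (Icc a b)) (hg : ContinuousOn g (Icc a b)) :
    (∫ s in a..b, f s * g s) ^ 2 ≤ (∫ s in a..b, f s ^ 2) * ∫ s in a..b, g s ^ 2 := by
  simp only [integral_of_le hab]
  exact sq_integral_mul_le_integral_sq_mul_integral_sq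
    (memLp_two_restrict_Ioc_of_continuousOn hf) (memLp_two_restrict_Ioc_of_continuousOn hg)

def tent (a b s : ℝ) : ℝ := min (s - a) (b - s)

theorem continuous_tent (a b : ℝ) : Continuous (tent a b) :=
  (continuous_id.sub continuous_const).min (continuous_const.sub continuous_id)

theorem tent_of_le_midpoint {a b s : ℝ} (hs : s ≤ (a + b) / 2) : tent a b s = s - a :=
  min_eq_left (by linarith)

theorem tent_of_midpoint_le {a b s : ℝ} (hs : (a + b) / 2 ≤ s) : tent a b s = b - s :=
  min_eq_right (by linarith)

theorem integral_tent_mul {f : ℝ → ℝ} {a b : ℝ} (hab : a ≤ b)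
    (hf : IntervalIntegrable f volume a b) :
    ∫ s in a..b, tent a b s * f s =
      (∫ s in (a + b) / 2..b, (b - s) * f s) - ∫ s in a..(a + b) / 2, (a - s) * f s := by
  have hm : (a + b) / 2 ∈ uIcc a b := by rw [uIcc_of_le hab]; constructor <;> linarith
  have htf : IntervalIntegrable (fun s => tent a b s * f s) volume a b :=
    hf.continuousOn_mul (continuous_tent a b).continuousOn
  have left : ∫ s in a..(a + b) / 2, tent a b s * f s = -∫ s in a..(a + b) / 2, (a - s) * f s := by
    rw [← intervalIntegral.integral_neg]
    refine integral_congr fun s hs => ?_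
    rw [uIcc_of_le (by linarith)] at hs
    simp only [tent_of_le_midpoint hs.2]
    ring
  have right : ∫ s in (a + b) / 2..b, tent a b s * f s = ∫ s in (a + b) / 2..b, (b - s) * f s := by
    refine integral_congr fun s hs => ?_
    rw [uIcc_of_le (by linarith)] at hs
    simp only [tent_of_midpoint_le hs.1]
  rw [← integral_add_adjacent_intervals (htf.mono_set (uIcc_subset_uIcc_left hm))
    (htf.mono_set (uIcc_subset_uIcc_right hm)), left, right]
  ring

theorem integral_tent_sq {a b : ℝ} (hab : a ≤ b) :
    ∫ s in a..b, tent a b s ^ 2 = (b - a) ^ 3 / 12 := by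
  set m := (a + b) / 2 with hm
  have ham : a ≤ m := by linarith
  have hmb : m ≤ b := by linarith
  have left : ∫ s in a..m, tent a b s ^ 2 = (m - a) ^ 3 / 3 := by
    rw [integral_congr (g := fun s => (s - a) ^ 2) fun s hs => ?_,
      integral_comp_sub_right (fun x => x ^ 2), integral_pow]
    · ring
    rw [uIcc_of_le ham] at hs
    simp only [tent_of_le_midpoint hs.2]
  have right : ∫ s in m..b, tent a b s ^ 2 = (b - m) ^ 3 / 3 := by
    rw [integral_congr (g := fun s => (b - s) ^ 2) fun s hs => ?_,
      integral_comp_sub_left (fun x => x ^ 2), integral_pow]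
    · ring
    rw [uIcc_of_le hmb] at hs
    simp only [tent_of_midpoint_le hs.1]
  have hsq : Continuous fun s => tent a b s ^ 2 := (continuous_tent a b).pow 2
  rw [← integral_add_adjacent_intervals (hsq.intervalIntegrable a m)
    (hsq.intervalIntegrable m b), left, right]
  ring

theorem midpoint_remainder_estimate
    (u : ℝ → ℝ) (hu : ContDiff ℝ 2 u)
    (tnm1 tn : ℝ) (hlt : tnm1 < tn) :
    ((∫ s in ((tnm1 + tn) / 2)..tn, (tn - s) * iteratedDeriv 2 u s)
      - ∫ s in tnm1..((tnm1 + tn) / 2), (tnm1 - s) * iteratedDeriv 2 u s) ^ 2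
    ≤ ((tn - tnm1) ^ 3 / 12) * ∫ s in tnm1..tn, (iteratedDeriv 2 u s) ^ 2 := by
  have hu'' : Continuous (iteratedDeriv 2 u) := hu.continuous_iteratedDeriv 2 le_rfl
  rw [← integral_tent_mul hlt.le (hu''.intervalIntegrable _ _), ← integral_tent_sq hlt.le]
  exact sq_intervalIntegral_mul_le hlt.le (continuous_tent _ _).continuousOn hu''.continuousOn
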